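/- Let β be a Pisot number and T the β-transformation. If x ∈ ℤ[β,β⁻¹] ∩ [0,1) satisfies T^n(x) = x for some n ≥ 1, then x ∈ ℤ[β]. -/

import Mathlib

noncomputable section

open IntermediateField

/-- A Pisot number: a real algebraic integer `β > 1` such that every ring embedding
`σ : ℚ(β) → ℂ` with `σ(β) ≠ β` satisfies `|σ(β)| < 1`. -/
def IsPisot (β : ℝ) : Prop :=
  1 < β ∧ IsIntegral ℤ β ∧
    ∀ σ : ℚ⟮β⟯ →+* ℂ, σ (AdjoinSimple.gen ℚ β) ≠ (β : ℂ) →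
      ‖σ (AdjoinSimple.gen ℚ β)‖ < 1

/-- The β-transformation `T(x) = βx − ⌊βx⌋`. -/
def betaT (β : ℝ) (x : ℝ) : ℝ := Int.fract (β * x)

/-!
Each step of the β-transformation multiplies by `β` and subtracts an integer, so
`β^k x - T^k x ∈ ℤ[β]` for every `k`. If `x ∈ ℤ[β,β⁻¹]` then `β^m x ∈ ℤ[β]` for some `m`,
and `x` is also periodic with the period `n m ≥ m`; hence
`x = β^(n m) x - (β^(n m) x - T^(n m) x)` lies in `ℤ[β]`.
-/

open Algebra

theorem exists_pow_mul_mem_adjoin_of_mem_adjoin_inv {R K : Type*} [CommRing R] [Field K]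
    [Algebra R K] {β y : K} (hβ : β ≠ 0) (hy : y ∈ adjoin R ({β, β⁻¹} : Set K)) :
    ∃ m : ℕ, β ^ m * y ∈ adjoin R ({β} : Set K) := by
  have hpow (k : ℕ) : β ^ k ∈ adjoin R ({β} : Set K) := pow_mem (self_mem_adjoin_singleton R β) k
  induction hy using Algebra.adjoin_induction with
  | mem y hy =>
    rcases hy with rfl | rfl
    · exact ⟨0, by simp⟩
    · exact ⟨1, by simp [hβ]⟩
  | algebraMap r => exact ⟨0, by simp⟩
  | add y z _ _ ihy ihz =>
    obtain ⟨m₁, hy⟩ := ihy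
    obtain ⟨m₂, hz⟩ := ihz
    refine ⟨m₁ + m₂, ?_⟩
    have e : β ^ (m₁ + m₂) * (y + z) = β ^ m₂ * (β ^ m₁ * y) + β ^ m₁ * (β ^ m₂ * z) := by ring
    rw [e]
    exact add_mem (mul_mem (hpow m₂) hy) (mul_mem (hpow m₁) hz)
  | mul y z _ _ ihy ihz =>
    obtain ⟨m₁, hy⟩ := ihy
    obtain ⟨m₂, hz⟩ := ihz
    refine ⟨m₁ + m₂, ?_⟩
    have e : β ^ (m₁ + m₂) * (y * z) = (β ^ m₁ * y) * (β ^ m₂ * z) := by ring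
    rw [e]
    exact mul_mem hy hz

theorem pow_mul_sub_iterate_betaT_mem_adjoin (β x : ℝ) (k : ℕ) :
    β ^ k * x - (betaT β)^[k] x ∈ adjoin ℤ ({β} : Set ℝ) := by
  induction k with
  | zero => simp
  | succ k ih =>
    set y := (betaT β)^[k] x
    have e : β ^ (k + 1) * x - betaT β y = β * (β ^ k * x - y) + (⌊β * y⌋ : ℝ) := by
      rw [betaT, ← Int.self_sub_floor]
      ring
    rw [Function.iterate_succ_apply', e]
    exact add_mem (mul_mem (self_mem_adjoin_singleton ℤ β) ih) (intCast_mem _ _)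

theorem purely_periodic_mem_zbeta_general (β : ℝ) (hβ : IsPisot β)
    (x : ℝ) (hx : x ∈ Algebra.adjoin ℤ ({β, β⁻¹} : Set ℝ))
    (n : ℕ) (hn : 1 ≤ n) (hper : (betaT β)^[n] x = x) :
    x ∈ Algebra.adjoin ℤ ({β} : Set ℝ) := by
  obtain ⟨m, hm⟩ := exists_pow_mul_mem_adjoin_of_mem_adjoin_inv (zero_lt_one.trans hβ.1).ne' hx
  have hdiff := pow_mul_sub_iterate_betaT_mem_adjoin β x (n * m)
  rw [Function.IsPeriodicPt.mul_const hper m] at hdiff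
  have hpow : β ^ (n * m) * x ∈ adjoin ℤ ({β} : Set ℝ) := by
    rw [← Nat.sub_add_cancel (Nat.le_mul_of_pos_left m hn), pow_add, mul_assoc]
    exact mul_mem (pow_mem (self_mem_adjoin_singleton ℤ β) _) hm
  simpa using sub_mem hpow hdiff

/-- For a Pisot number `β`, a purely periodic point of the β-transformation lying in
`ℤ[β,β⁻¹] ∩ [0,1)` actually lies in `ℤ[β]`. -/
theorem purely_periodic_mem_zbeta (β : ℝ) (hβ : IsPisot β)
    (x : ℝ) (hx : x ∈ Algebra.adjoin ℤ ({β, β⁻¹} : Set ℝ)) (hx01 : x ∈ Set.Ico (0 : ℝ) 1)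
    (n : ℕ) (hn : 1 ≤ n) (hper : (betaT β)^[n] x = x) :
    x ∈ Algebra.adjoin ℤ ({β} : Set ℝ) :=
  purely_periodic_mem_zbeta_general β hβ x hx n hn hper
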